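/- Let Σ be an alphabet, Σ_1,…,Σ_n ⊆ Σ subalphabets with projections P_i, and K ⊆ L ⊆ Σ* languages, and suppose the OCT condition holds. Define, for each i ∈ {1,…,n}, the function f_i : Σ_i* → {Y,N,U} by: f_i(σ) = Y if there exists ρ ∈ K with P_i(ρ) = σ and for all ρ' ∈ L \ K, P_i(ρ') ≠ σ; f_i(σ) = N if there exists ρ ∈ L \ K with P_i(ρ) = σ and for all ρ' ∈ K, P_i(ρ') ≠ σ; and f_i(σ) = U otherwise. Then these functions f_i satisfy the ALTOCT requirements: (for all ρ ∈ L there exists i with (ρ ∈ K → f_i(P_i(ρ)) = Y) and (ρ ∈ L \ K → f_i(P_i(ρ)) = N)) and (for all ρ ∈ L and all i, (f_i(P_i(ρ)) = Y → ρ ∈ K) and (f_i(P_i(ρ)) = N → ρ ∈ L \ K)). -/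
import Mathlib


/-- The three possible observer outputs: Yes, No, Unknown. -/
inductive Obs : Type
  | Y
  | N
  | U
deriving DecidableEq

/-- Projection onto subalphabet `Sub i`: keep only the letters lying in `Sub i`. -/
def P {α : Type*} {n : ℕ} (Sub : Fin n → Set α) [∀ i, DecidablePred (· ∈ Sub i)]
    (i : Fin n) (ρ : List α) : List α :=
  ρ.filter (fun x => decide (x ∈ Sub i))

/-- Agent `i` can tell whether `ρ` is good or bad. -/
def cantell {α : Type*} {n : ℕ} (Sub : Fin n → Set α) [∀ i, DecidablePred (· ∈ Sub i)]
    (K L : Set (List α)) (i : Fin n) (ρ : List α) : Prop :=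
  (ρ ∈ K → ¬ ∃ ρ' ∈ L \ K, P Sub i ρ = P Sub i ρ') ∧
  (ρ ∈ L \ K → ¬ ∃ ρ' ∈ K, P Sub i ρ = P Sub i ρ')

/-- The "at least one can tell" (OCT) condition. -/
def OCT {α : Type*} {n : ℕ} (Sub : Fin n → Set α) [∀ i, DecidablePred (· ∈ Sub i)]
    (K L : Set (List α)) : Prop :=
  ∀ ρ ∈ L, ∃ i : Fin n, cantell Sub K L i ρ

/-- The given family of local decision functions satisfies the ALTOCT requirements. -/
def ALTOCTwith {α : Type*} {n : ℕ} (Sub : Fin n → Set α) [∀ i, DecidablePred (· ∈ Sub i)]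
    (K L : Set (List α)) (f : Fin n → List α → Obs) : Prop :=
  (∀ ρ ∈ L, ∃ i : Fin n,
      (ρ ∈ K → f i (P Sub i ρ) = Obs.Y) ∧ (ρ ∈ L \ K → f i (P Sub i ρ) = Obs.N)) ∧
  (∀ ρ ∈ L, ∀ i : Fin n,
      (f i (P Sub i ρ) = Obs.Y → ρ ∈ K) ∧ (f i (P Sub i ρ) = Obs.N → ρ ∈ L \ K))

/-- The alternative OCT (ALTOCT) condition: suitable local decision functions exist. -/
def ALTOCT {α : Type*} {n : ℕ} (Sub : Fin n → Set α) [∀ i, DecidablePred (· ∈ Sub i)]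
    (K L : Set (List α)) : Prop :=
  ∃ f : Fin n → List α → Obs, ALTOCTwith Sub K L f

/-- The canonical local decision function of agent `i`:
`Y` if the observation is compatible only with good words, `N` if only with bad
words, and `U` otherwise. -/
noncomputable def fdef {α : Type*} {n : ℕ} (Sub : Fin n → Set α)
    [∀ i, DecidablePred (· ∈ Sub i)] (K L : Set (List α))
    (i : Fin n) (σ : List α) : Obs := by
  classical
  exact
    if (∃ ρ ∈ K, P Sub i ρ = σ) ∧ (∀ ρ' ∈ L \ K, P Sub i ρ' ≠ σ) then Obs.Y
    else if (∃ ρ ∈ L \ K, P Sub i ρ = σ) ∧ (∀ ρ' ∈ K, P Sub i ρ' ≠ σ) then Obs.N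
    else Obs.U

/-- if OCT holds, the canonical functions `fdef` satisfy the
ALTOCT requirements. -/
theorem fdef_satisfies_ALTOCT {α : Type*} {n : ℕ} (hn : 0 < n)
    (Sub : Fin n → Set α) [∀ i, DecidablePred (· ∈ Sub i)]
    (K L : Set (List α)) (hKL : K ⊆ L)
    (hOCT : OCT Sub K L) :
    ALTOCTwith Sub K L (fdef Sub K L) := by
  classical
  constructor
  · intro ρ hρ
    obtain ⟨i, hct⟩ := hOCT ρ hρ
    refine ⟨i, ?_, ?_⟩
    · intro hK
      have h1 : (∃ ρ'' ∈ K, P Sub i ρ'' = P Sub i ρ) ∧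
          (∀ ρ' ∈ L \ K, P Sub i ρ' ≠ P Sub i ρ) := by
        refine ⟨⟨ρ, hK, rfl⟩, fun ρ' hρ' heq => hct.1 hK ⟨ρ', hρ', heq.symm⟩⟩
      unfold fdef
      rw [if_pos h1]
    · intro hLK
      have h2 : ∀ ρ' ∈ K, P Sub i ρ' ≠ P Sub i ρ :=
        fun ρ' hρ' heq => hct.2 hLK ⟨ρ', hρ', heq.symm⟩
      have h1 : ¬((∃ ρ'' ∈ K, P Sub i ρ'' = P Sub i ρ) ∧
          (∀ ρ' ∈ L \ K, P Sub i ρ' ≠ P Sub i ρ)) := by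
        rintro ⟨⟨ρ'', hρ'', heq⟩, -⟩
        exact h2 ρ'' hρ'' heq
      unfold fdef
      rw [if_neg h1, if_pos ⟨⟨ρ, hLK, rfl⟩, h2⟩]
  · intro ρ hρ i
    constructor
    · intro hY
      by_contra hK
      have h1 : ¬((∃ ρ'' ∈ K, P Sub i ρ'' = P Sub i ρ) ∧
          (∀ ρ' ∈ L \ K, P Sub i ρ' ≠ P Sub i ρ)) := by
        rintro ⟨-, hall⟩
        exact hall ρ ⟨hρ, hK⟩ rfl
      unfold fdef at hY
      rw [if_neg h1] at hY
      split at hY <;> exact Obs.noConfusion hY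
    · intro hN
      by_contra hLK
      have hK : ρ ∈ K := by
        by_contra hK
        exact hLK ⟨hρ, hK⟩
      have h2 : ¬((∃ ρ'' ∈ L \ K, P Sub i ρ'' = P Sub i ρ) ∧
          (∀ ρ' ∈ K, P Sub i ρ' ≠ P Sub i ρ)) := by
        rintro ⟨-, hall⟩
        exact hall ρ hK rfl
      unfold fdef at hN
      split at hN
      all_goals first
        | exact Obs.noConfusion hN
        | exact h2 ‹_›
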